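/- In the setting of the Floquet decomposition w11(τ) = γ u̇0(τ) + e^{−f0 τ} b(τ) (u0 a nonconstant 2πρ-periodic C² solution of ü + f(u)u̇ + g(u) = 0 with u̇0(0) = 0, ü0(0) ≠ 0, f0 > 0, b continuous 2πρ-periodic, w11 the solution of the linearised equation with w11(0) = 1, ẇ11(0) = 0), assume additionally that u0(τ + πρ) = −u0(τ) for all τ. Then both components are anti-periodic with anti-period πρ: the periodic part a(τ) = γ u̇0(τ) satisfies a(τ + πρ) = −a(τ), and b satisfies b(τ + πρ) = −b(τ) for all τ; that is, the Fourier expansions of a and b contain only the odd harmonics. -/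

import Mathlib

/-!
Because `u0` is `πρ`-antiperiodic, the coefficients of the variational equation
`y'' + F y' + Q y = 0` are `T`-periodic for `T = πρ`, so the shift by `T` maps solutions to
solutions; it sends `p = u̇0` to `-p`. The solution `ψ = w11 - γ u̇0 = e^{-f0 τ} b(τ)` has
multiplier `e^{-2 f0 T} ≠ 1` over the full period, and comparing with `p` (multiplier `1`) forces
the shift to map `ψ` to `B ψ` with `B² = e^{-2 f0 T}`. Abel's identity for the Wronskian of `p`
and `ψ` between `0` and `T` gives `B < 0`, so `B = -e^{-f0 T}`, i.e. `b(τ + T) = -b(τ)`.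
-/

open Real Function

theorem Function.Antiperiodic.deriv {𝕜 E : Type*} [NontriviallyNormedField 𝕜]
    [NormedAddCommGroup E] [NormedSpace 𝕜 E] {f : 𝕜 → E} {c : 𝕜} (h : Antiperiodic f c) :
    Antiperiodic (deriv f) c := fun x => by
  rw [← deriv_comp_add_const, funext h, deriv.fun_neg]

theorem eq_mul_exp_neg_integral_of_hasDerivAt {F V : ℝ → ℝ} (hF : Continuous F)
    (hV : ∀ τ, HasDerivAt V (-(F τ * V τ)) τ) (τ : ℝ) :
    V τ = V 0 * exp (-∫ s in (0:ℝ)..τ, F s) := by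
  have hI t : HasDerivAt (fun u => ∫ s in (0:ℝ)..u, F s) (F t) t :=
    intervalIntegral.integral_hasDerivAt_right (hF.intervalIntegrable _ _)
      (hF.stronglyMeasurableAtFilter _ _) hF.continuousAt
  have hconst t : HasDerivAt (fun u => V u * exp (∫ s in (0:ℝ)..u, F s)) 0 t :=
    ((hV t).mul (hI t).exp).congr_deriv (by ring)
  have h := is_const_of_deriv_eq_zero (fun t => (hconst t).differentiableAt)
    (fun t => (hconst t).deriv) τ 0
  simp only [intervalIntegral.integral_same, exp_zero, mul_one] at h
  rw [exp_neg, ← h, mul_inv_cancel_right₀ (exp_ne_zero _)]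

/-- `y` solves `y'' + F y' + Q y = 0`, with `y'` standing for its derivative. -/
structure SolvesLinearODE (F Q y y' : ℝ → ℝ) : Prop where
  hasDerivAt : ∀ τ, HasDerivAt y (y' τ) τ
  hasDerivAt' : ∀ τ, HasDerivAt y' (-(F τ * y' τ + Q τ * y τ)) τ

def wronskian (y y' z z' : ℝ → ℝ) (τ : ℝ) : ℝ := y τ * z' τ - y' τ * z τ

theorem ContDiff.solvesLinearODE {F Q w : ℝ → ℝ} (hw : ContDiff ℝ 2 w)
    (hode : ∀ τ, deriv (deriv w) τ + F τ * deriv w τ + Q τ * w τ = 0) :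
    SolvesLinearODE F Q w (deriv w) where
  hasDerivAt τ := (hw.differentiable two_ne_zero τ).hasDerivAt
  hasDerivAt' τ := (hw.differentiable_deriv_two τ).hasDerivAt.congr_deriv (by linarith [hode τ])

theorem ContDiff.deriv_solvesLinearODE {f f' g g' u : ℝ → ℝ}
    (hf : ∀ x, HasDerivAt f (f' x) x) (hg : ∀ x, HasDerivAt g (g' x) x) (hu : ContDiff ℝ 2 u)
    (hode : ∀ τ, deriv (deriv u) τ + f (u τ) * deriv u τ + g (u τ) = 0) :
    SolvesLinearODE (fun τ => f (u τ)) (fun τ => f' (u τ) * deriv u τ + g' (u τ))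
      (deriv u) (deriv (deriv u)) where
  hasDerivAt τ := (hu.differentiable_deriv_two τ).hasDerivAt
  hasDerivAt' τ := by
    have hu' t : HasDerivAt u (deriv u t) t := (hu.differentiable two_ne_zero t).hasDerivAt
    have hu'' := (hu.differentiable_deriv_two τ).hasDerivAt
    have hrhs : deriv (deriv u) = fun t => -(f (u t) * deriv u t + g (u t)) :=
      funext fun t => by linarith [hode t]
    rw [hrhs]
    exact ((((hf (u τ)).comp τ (hu' τ)).mul hu'').add ((hg (u τ)).comp τ (hu' τ))).neg.congr_deriv
      (by simp only [comp_apply, hrhs]; ring)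

namespace SolvesLinearODE

variable {F Q y y' z z' : ℝ → ℝ}

theorem add (hy : SolvesLinearODE F Q y y') (hz : SolvesLinearODE F Q z z') :
    SolvesLinearODE F Q (fun τ => y τ + z τ) (fun τ => y' τ + z' τ) where
  hasDerivAt τ := (hy.hasDerivAt τ).add (hz.hasDerivAt τ)
  hasDerivAt' τ := ((hy.hasDerivAt' τ).add (hz.hasDerivAt' τ)).congr_deriv (by ring)

theorem sub (hy : SolvesLinearODE F Q y y') (hz : SolvesLinearODE F Q z z') :
    SolvesLinearODE F Q (fun τ => y τ - z τ) (fun τ => y' τ - z' τ) where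
  hasDerivAt τ := (hy.hasDerivAt τ).sub (hz.hasDerivAt τ)
  hasDerivAt' τ := ((hy.hasDerivAt' τ).sub (hz.hasDerivAt' τ)).congr_deriv (by ring)

theorem const_mul (hy : SolvesLinearODE F Q y y') (a : ℝ) :
    SolvesLinearODE F Q (fun τ => a * y τ) (fun τ => a * y' τ) where
  hasDerivAt τ := (hy.hasDerivAt τ).const_mul a
  hasDerivAt' τ := ((hy.hasDerivAt' τ).const_mul a).congr_deriv (by ring)

theorem comp_add_const (hy : SolvesLinearODE F Q y y') {T : ℝ} (hF : Periodic F T)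
    (hQ : Periodic Q T) : SolvesLinearODE F Q (fun τ => y (τ + T)) (fun τ => y' (τ + T)) where
  hasDerivAt τ := (hy.hasDerivAt (τ + T)).comp_add_const τ T
  hasDerivAt' τ := by simpa only [hF τ, hQ τ] using (hy.hasDerivAt' (τ + T)).comp_add_const τ T

theorem wronskian_eq (hF : Continuous F) (hy : SolvesLinearODE F Q y y')
    (hz : SolvesLinearODE F Q z z') (τ : ℝ) :
    wronskian y y' z z' τ = wronskian y y' z z' 0 * exp (-∫ s in (0:ℝ)..τ, F s) :=
  eq_mul_exp_neg_integral_of_hasDerivAt (V := wronskian y y' z z') hF (fun t =>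
    ((hy.hasDerivAt t).mul (hz.hasDerivAt' t)).sub ((hy.hasDerivAt' t).mul (hz.hasDerivAt t))
      |>.congr_deriv (by rw [wronskian]; ring)) τ

theorem exists_eq_add (hF : Continuous F) (hy : SolvesLinearODE F Q y y')
    (hz : SolvesLinearODE F Q z z') (hW : wronskian y y' z z' 0 ≠ 0) {x x' : ℝ → ℝ}
    (hx : SolvesLinearODE F Q x x') : ∃ A B : ℝ, ∀ τ, x τ = A * y τ + B * z τ := by
  set A := wronskian x x' z z' 0 / wronskian y y' z z' 0
  set B := wronskian y y' x x' 0 / wronskian y y' z z' 0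
  set h := fun τ => x τ - (A * y τ + B * z τ)
  set h' := fun τ => x' τ - (A * y' τ + B * z' τ)
  have hh : SolvesLinearODE F Q h h' := hx.sub ((hy.const_mul A).add (hz.const_mul B))
  have hyh : wronskian y y' h h' 0 = 0 := by
    have hB : B * wronskian y y' z z' 0 = wronskian y y' x x' 0 := div_mul_cancel₀ _ hW
    simp only [h, h', wronskian] at hB ⊢
    linear_combination -hB
  have hzh : wronskian z z' h h' 0 = 0 := by
    have hA : A * wronskian y y' z z' 0 = wronskian x x' z z' 0 := div_mul_cancel₀ _ hW
    simp only [h, h', wronskian] at hA ⊢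
    linear_combination hA
  refine ⟨A, B, fun τ => ?_⟩
  have hWτ : wronskian y y' z z' τ ≠ 0 := by
    rw [hy.wronskian_eq hF hz]; exact mul_ne_zero hW (exp_ne_zero _)
  have hcramer : h τ * wronskian y y' z z' τ =
      z τ * wronskian y y' h h' τ - y τ * wronskian z z' h h' τ := by
    simp only [wronskian]; ring
  rw [hy.wronskian_eq hF hh, hz.wronskian_eq hF hh, hyh, hzh] at hcramer
  simpa [h, sub_eq_zero, hWτ] using hcramer

variable {p p' ψ ψ' : ℝ → ℝ} {T : ℝ}

theorem exists_shift_eq_mul (hF : Continuous F) (hFT : Periodic F T) (hQT : Periodic Q T)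
    (hp : SolvesLinearODE F Q p p') (hpT : Antiperiodic p T) (hp0 : p 0 = 0) (hp'0 : p' 0 ≠ 0)
    (hψ : SolvesLinearODE F Q ψ ψ') (hψ0 : ψ 0 ≠ 0) {c : ℝ} (hc : c ≠ 1)
    (hψ2T : ∀ τ, ψ (τ + 2 * T) = c * ψ τ) :
    ∃ B, B ^ 2 = c ∧ ∀ τ, ψ (τ + T) = B * ψ τ := by
  have hW : wronskian p p' ψ ψ' 0 ≠ 0 := by
    simpa [wronskian, hp0] using mul_ne_zero hp'0 hψ0
  obtain ⟨A, B, hAB⟩ := hp.exists_eq_add hF hψ hW (hψ.comp_add_const hFT hQT)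
  have hc_eq τ : c * ψ τ = A * (B - 1) * p τ + B ^ 2 * ψ τ := by
    rw [← hψ2T, two_mul, ← add_assoc, hAB, hpT, hAB]; ring
  have hB : B ^ 2 = c := by
    simpa [hp0, hψ0] using (hc_eq 0).symm
  have hA : A = 0 := by
    by_contra hA
    have hB1 : B - 1 ≠ 0 := sub_ne_zero.mpr (by rintro rfl; exact hc (by simpa using hB.symm))
    have hp_zero : p = fun _ => 0 := funext fun τ => by
      simpa [hB, hA, hB1] using hc_eq τ
    apply hp'0
    rw [← (hp.hasDerivAt 0).deriv, hp_zero, deriv_const]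
  exact ⟨B, hB, fun τ => by rw [hAB, hA]; ring⟩

theorem multiplier_eq_neg_exp (hF : Continuous F) (hp : SolvesLinearODE F Q p p')
    (hpT : Antiperiodic p T) (hp0 : p 0 = 0) (hp'0 : p' 0 ≠ 0) (hψ : SolvesLinearODE F Q ψ ψ')
    (hψ0 : ψ 0 ≠ 0) {B : ℝ} (hB : ψ T = B * ψ 0) : B = -exp (-∫ s in (0:ℝ)..T, F s) := by
  have hpT0 : p T = 0 := by simpa [hp0] using hpT 0
  have hp'T : p' T = -p' 0 := by
    rw [← (hp.hasDerivAt _).deriv, ← (hp.hasDerivAt _).deriv]; simpa using hpT.deriv 0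
  have h := hp.wronskian_eq hF hψ T
  simp only [wronskian, hpT0, hp'T, hB, hp0] at h
  apply mul_left_cancel₀ (mul_ne_zero hp'0 hψ0)
  linear_combination h

theorem antiperiodic_of_eq_add_exp_mul (hF : Continuous F) (hFT : Periodic F T)
    (hQT : Periodic Q T) (hp : SolvesLinearODE F Q p p') (hpT : Antiperiodic p T) (hp0 : p 0 = 0)
    (hp'0 : p' 0 ≠ 0) {w w' b : ℝ → ℝ} (hw : SolvesLinearODE F Q w w') (hw0 : w 0 ≠ 0) {γ μ : ℝ}
    (hwb : ∀ τ, w τ = γ * p τ + exp (-μ * τ) * b τ) (hb : Periodic b (2 * T)) (hμT : μ * T ≠ 0) :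
    Antiperiodic b T := by
  have hψ := hw.sub (hp.const_mul γ)
  have hψb τ : w τ - γ * p τ = exp (-μ * τ) * b τ := by rw [hwb]; ring
  have hψ0 : w 0 - γ * p 0 ≠ 0 := by rwa [hp0, mul_zero, sub_zero]
  have hψ2T τ : w (τ + 2 * T) - γ * p (τ + 2 * T) = exp (-μ * T) ^ 2 * (w τ - γ * p τ) := by
    rw [hψb, hψb, hb, ← mul_assoc, sq, ← exp_add, ← exp_add]
    congr 2
    ring
  have hc : exp (-μ * T) ^ 2 ≠ 1 := by
    rw [ne_eq, pow_eq_one_iff_of_nonneg (exp_pos _).le two_ne_zero, exp_eq_one_iff]; simpa using hμT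
  obtain ⟨B, hB2, hBψ⟩ := hp.exists_shift_eq_mul hF hFT hQT hpT hp0 hp'0 hψ hψ0 hc hψ2T
  have hBneg : B < 0 := by
    rw [hp.multiplier_eq_neg_exp hF hpT hp0 hp'0 hψ hψ0 (B := B) (by simpa using hBψ 0)]
    exact neg_neg_of_pos (exp_pos _)
  have hB : B = -exp (-μ * T) :=
    neg_eq_iff_eq_neg.mp ((pow_left_inj₀ (by linarith) (exp_pos _).le two_ne_zero).mp
      (by rw [neg_sq, hB2]))
  intro τ
  have h := hBψ τ
  rw [hψb, hψb, hB, mul_add, exp_add] at h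
  apply mul_left_cancel₀ (mul_ne_zero (exp_ne_zero (-μ * τ)) (exp_ne_zero (-μ * T)))
  linear_combination h

end SolvesLinearODE

theorem floquet_parts_antiperiodic_general
    (ρ Ω0 α β : ℝ) (hρ : 0 < ρ)
    (u0 : ℝ → ℝ) (hu0C : ContDiff ℝ 2 u0)
    (hode : ∀ τ : ℝ,
      deriv (deriv u0) τ + (ρ * Ω0)⁻¹ * (1 - β + 3 * β * (u0 τ) ^ 2) * deriv u0 τ
        + ((ρ * Ω0)⁻¹) ^ 2 * ((α - β) * u0 τ + β * (u0 τ) ^ 3) = 0)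
    (h1 : deriv u0 0 = 0) (h2 : deriv (deriv u0) 0 ≠ 0)
    (hu0anti : ∀ τ : ℝ, u0 (τ + π * ρ) = - u0 τ)
    (f0 : ℝ)
    (hf0pos : 0 < f0)
    (w11 : ℝ → ℝ) (hw11C : ContDiff ℝ 2 w11)
    (hw11ode : ∀ τ : ℝ,
      deriv (deriv w11) τ + (ρ * Ω0)⁻¹ * (1 - β + 3 * β * (u0 τ) ^ 2) * deriv w11 τ
        + ((ρ * Ω0)⁻¹ * (6 * β * u0 τ) * deriv u0 τ
          + ((ρ * Ω0)⁻¹) ^ 2 * ((α - β) + 3 * β * (u0 τ) ^ 2)) * w11 τ = 0)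
    (hw110 : w11 0 = 1)
    (γ : ℝ) (b : ℝ → ℝ) (hbper : Function.Periodic b (2 * π * ρ))
    (hdecomp : ∀ τ : ℝ, w11 τ = γ * deriv u0 τ + Real.exp (-f0 * τ) * b τ) :
    (∀ τ : ℝ, γ * deriv u0 (τ + π * ρ) = -(γ * deriv u0 τ)) ∧
    (∀ τ : ℝ, b (τ + π * ρ) = - b τ) := by
  have hf x : HasDerivAt (fun x => (ρ * Ω0)⁻¹ * (1 - β + 3 * β * x ^ 2))
      ((ρ * Ω0)⁻¹ * (6 * β * x)) x :=
    ((((hasDerivAt_pow 2 x).const_mul (3 * β)).const_add (1 - β)).const_mul (ρ * Ω0)⁻¹).congr_deriv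
      (by push_cast; ring)
  have hg x : HasDerivAt (fun x => ((ρ * Ω0)⁻¹) ^ 2 * ((α - β) * x + β * x ^ 3))
      (((ρ * Ω0)⁻¹) ^ 2 * ((α - β) + 3 * β * x ^ 2)) x :=
    ((((hasDerivAt_id' x).const_mul (α - β)).add ((hasDerivAt_pow 3 x).const_mul β)).const_mul
      ((ρ * Ω0)⁻¹ ^ 2)).congr_deriv (by push_cast; ring)
  have hp := hu0C.deriv_solvesLinearODE hf hg hode
  have hpT : Antiperiodic (deriv u0) (π * ρ) := Antiperiodic.deriv hu0anti
  refine ⟨fun τ => by rw [hpT τ, mul_neg], ?_⟩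
  have hu0 : Continuous u0 := hu0C.continuous
  refine hp.antiperiodic_of_eq_add_exp_mul (by fun_prop) (fun τ => by simp [hu0anti])
    (fun τ => by simp [hu0anti, hpT τ]) hpT h1 h2 (hw11C.solvesLinearODE hw11ode)
    (by rw [hw110]; exact one_ne_zero) hdecomp (by rwa [← mul_assoc]) (by positivity)

/-- In the Floquet decomposition `w11(τ) = γ u̇0(τ) + e^{-f0 τ} b(τ)`, if
moreover `u0(τ + πρ) = -u0(τ)`, then both the periodic part `a(τ) = γ u̇0(τ)`
and `b` are anti-periodic with anti-period `πρ` (i.e. contain only odd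
harmonics). -/
theorem floquet_parts_antiperiodic
    (ρ Ω0 α β : ℝ) (hρ : 0 < ρ) (hΩ0 : 0 < Ω0) (hβ : 1 < β) (hαβ : β < α)
    (u0 : ℝ → ℝ) (hu0C : ContDiff ℝ 2 u0)
    (hnc : ∃ a b : ℝ, u0 a ≠ u0 b)
    (hper : Function.Periodic u0 (2 * π * ρ))
    (hode : ∀ τ : ℝ,
      deriv (deriv u0) τ + (ρ * Ω0)⁻¹ * (1 - β + 3 * β * (u0 τ) ^ 2) * deriv u0 τ
        + ((ρ * Ω0)⁻¹) ^ 2 * ((α - β) * u0 τ + β * (u0 τ) ^ 3) = 0)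
    (h1 : deriv u0 0 = 0) (h2 : deriv (deriv u0) 0 ≠ 0)
    (hu0anti : ∀ τ : ℝ, u0 (τ + π * ρ) = - u0 τ)
    (f0 : ℝ)
    (hf0def : f0 = (2 * π * ρ)⁻¹ *
      ∫ s in (0:ℝ)..(2 * π * ρ), (ρ * Ω0)⁻¹ * (1 - β + 3 * β * (u0 s) ^ 2))
    (hf0pos : 0 < f0)
    (w11 : ℝ → ℝ) (hw11C : ContDiff ℝ 2 w11)
    (hw11ode : ∀ τ : ℝ,
      deriv (deriv w11) τ + (ρ * Ω0)⁻¹ * (1 - β + 3 * β * (u0 τ) ^ 2) * deriv w11 τ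
        + ((ρ * Ω0)⁻¹ * (6 * β * u0 τ) * deriv u0 τ
          + ((ρ * Ω0)⁻¹) ^ 2 * ((α - β) + 3 * β * (u0 τ) ^ 2)) * w11 τ = 0)
    (hw110 : w11 0 = 1) (hw11d0 : deriv w11 0 = 0)
    (γ : ℝ) (b : ℝ → ℝ) (hb : Continuous b) (hbper : Function.Periodic b (2 * π * ρ))
    (hdecomp : ∀ τ : ℝ, w11 τ = γ * deriv u0 τ + Real.exp (-f0 * τ) * b τ) :
    (∀ τ : ℝ, γ * deriv u0 (τ + π * ρ) = -(γ * deriv u0 τ)) ∧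
    (∀ τ : ℝ, b (τ + π * ρ) = - b τ) :=
  floquet_parts_antiperiodic_general ρ Ω0 α β hρ u0 hu0C hode h1 h2 hu0anti f0 hf0pos w11 hw11C
    hw11ode hw110 γ b hbper hdecomp
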